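/- arXiv:1705.03771 — 2 statements merged into one kernel-verified Lean document; each statement's English description precedes it below -/
import Mathlib

section
/- In the 5-realization example, with threshold x = 23/25, the stop node of realization φ_2 under the greedy policy is node b = {φ_1, φ_2, φ_3} and the stop node of realization φ_1 is node c = {φ_1, φ_3}; since φ_1 and φ_3 belong to both b and c, the collection of stop nodes does not partition the set of realizations. -/
/-!
With `x = 23/25` the rewards along the path `r → b → d` of `φ₂` are `1/25, 17/25, 1`, and along
the path `r → b → c → {φ₁}` of `φ₁` they are `1/25, 17/25, 22/25, 1`; the largest reward below `x`
is attained at `b`, resp. `c`. These two stop nodes are distinct but share `φ₁` and `φ₃`.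
-/

/-- Expected reward of a node `a` in the 5-realization example: all
realizations have probability 1/5 and distinct classes, so
`f_E(a) = 1 - (|a|/5)^2 + 1/25`. -/
def fE (a : Finset (Fin 5)) : ℚ := 1 - ((a.card : ℚ) / 5) ^ 2 + 1/25

/-- `a` is the stop node for threshold `x` along the root-to-leaf `path` of a
realization: it lies on the path, has expected reward `< x`, and attains the
maximal expected reward among nodes on the path with reward `< x`. -/
def IsStopNode (path : List (Finset (Fin 5))) (x : ℚ) (a : Finset (Fin 5)) : Prop :=
  a ∈ path ∧ fE a < x ∧ ∀ a' ∈ path, fE a' < x → fE a' ≤ fE a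

lemma IsStopNode.of_forall_le_or_le {path : List (Finset (Fin 5))} {x : ℚ} {a : Finset (Fin 5)}
    (ha : a ∈ path) (hax : fE a < x) (hmax : ∀ a' ∈ path, fE a' ≤ fE a ∨ x ≤ fE a') :
    IsStopNode path x a :=
  ⟨ha, hax, fun a' ha' hlt => (hmax a' ha').resolve_right hlt.not_ge⟩

lemma Finset.not_pairwise_disjoint_pair {α : Type*} [DecidableEq α] {s t : Finset α}
    (hst : s ≠ t) (h : (s ∩ t).Nonempty) :
    ¬ ({s, t} : Set (Finset α)).Pairwise (Disjoint · ·) := by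
  rw [Set.pairwise_pair]
  exact fun hd => Finset.not_disjoint_iff_nonempty_inter.2 h (hd hst).1

/-- With threshold `x = 23/25`, the stop node of `φ₂` (whose greedy path is
`r → b → d`) is `b = {φ₁,φ₂,φ₃}`, and the stop node of `φ₁` (path
`r → b → c → {φ₁}`) is `c = {φ₁,φ₃}`; since `b ∩ c ≠ ∅` and `b ≠ c`, the
collection of stop nodes is not pairwise disjoint, hence it does not
partition the realizations. -/
theorem stmt3 :
    let r : Finset (Fin 5) := Finset.univ
    let b : Finset (Fin 5) := {0, 1, 2}
    let c : Finset (Fin 5) := {0, 2}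
    let d : Finset (Fin 5) := {1}
    let e : Finset (Fin 5) := {0}
    IsStopNode [r, b, d] (23/25) b ∧
    IsStopNode [r, b, c, e] (23/25) c ∧
    (b ∩ c).Nonempty ∧ b ≠ c ∧
    ¬ ({b, c} : Set (Finset (Fin 5))).Pairwise (Disjoint · ·) := by
  intro r b c d e
  have hb : IsStopNode [r, b, d] (23/25) b := by
    refine IsStopNode.of_forall_le_or_le (by simp) ?_ ?_ <;>
      simp [r, b, d, fE, Finset.card_insert_of_notMem] <;> norm_num
  have hc : IsStopNode [r, b, c, e] (23/25) c := by
    refine IsStopNode.of_forall_le_or_le (by simp) ?_ ?_ <;>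
      simp [r, b, c, e, fE, Finset.card_insert_of_notMem] <;> norm_num
  have hbc : b ≠ c := by decide
  have hinter : (b ∩ c).Nonempty := ⟨0, by decide⟩
  exact ⟨hb, hc, hinter, hbc, Finset.not_pairwise_disjoint_pair hbc hinter⟩
end

section
/- The function f(Q_A, φ_i) = 1 - p_a^2 + (p_a^{k_i})^2, where p_a is the total probability of realizations consistent with the observations Q_A and p_a^{k_i} is the probability mass of those of class k_i, satisfies strong adaptive monotonicity: if node b is obtained from node a by observing the outcome of one additional item, then f_E(b) ≥ f_E(a), where f_E(a) = Σ_{φ∈a} (p(φ)/p_a) f(Q_A, φ). -/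
/-!
Grouping the realizations of a node `s` by class turns the expected reward into
`f_E(s) = 1 - P² + (∑ₖ mₖ³) / P`, with class masses `mₖ` and total mass `P = ∑ₖ mₖ`.
Passing to a child only decreases every class mass, so it suffices that
`m ↦ (∑ₖ mₖ³) / ∑ₖ mₖ - (∑ₖ mₖ)²` does not decrease when the nonnegative vector `m`
decreases coordinatewise. Writing the child masses as `rₖ` (total `Q`) and the decrements as
`dₖ` (total `D`), this follows by summing a cubic inequality that only uses `rₖ ≤ Q`, `dₖ ≤ D`.
-/

open Finset

section CubeSums

lemma mul_cube_add_sub_cube_le {Q D r d : ℝ} (hr : 0 ≤ r) (hd : 0 ≤ d) (hrQ : r ≤ Q)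
    (hdD : d ≤ D) :
    Q * ((r + d) ^ 3 - r ^ 3) ≤ D * (2 * Q ^ 2 * r + r ^ 3) + (3 * Q ^ 2 * D + Q * D ^ 2) * d := by
  have hQ : 0 ≤ Q := hr.trans hrQ
  have hD : 0 ≤ D := hd.trans hdD
  -- the difference is `D r (Q - r) (2Q - r) + 3Q r² (D - d) + 3Q d (QD - rd) + Q d (D² - d²)`
  nlinarith [mul_nonneg (mul_nonneg hD hr) (mul_nonneg (sub_nonneg.2 hrQ) (by linarith : 0 ≤ 2 * Q - r)),
    mul_nonneg (mul_nonneg hQ (sq_nonneg r)) (sub_nonneg.2 hdD),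
    mul_nonneg (mul_nonneg hQ hd) (sub_nonneg.2 (mul_le_mul hrQ hdD hd hQ)),
    mul_nonneg (mul_nonneg hQ hd) (sub_nonneg.2 (mul_le_mul hdD hdD hd hD))]

variable {K : Type*} {I : Finset K} {q r : K → ℝ}

lemma sum_cube_div_sum_sub_sq_le (hr : ∀ k ∈ I, 0 ≤ r k) (hrq : ∀ k ∈ I, r k ≤ q k)
    (hQ : 0 < ∑ k ∈ I, r k) :
    (∑ k ∈ I, q k ^ 3) / (∑ k ∈ I, q k) - (∑ k ∈ I, q k) ^ 2 ≤
      (∑ k ∈ I, r k ^ 3) / (∑ k ∈ I, r k) - (∑ k ∈ I, r k) ^ 2 := by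
  set Q := ∑ k ∈ I, r k
  set D := ∑ k ∈ I, (q k - r k) with hD_def
  have hd : ∀ k ∈ I, 0 ≤ q k - r k := fun k hk => sub_nonneg.2 (hrq k hk)
  have hPQD : ∑ k ∈ I, q k = Q + D := by rw [hD_def, sum_sub_distrib]; ring
  have hD : 0 ≤ D := sum_nonneg hd
  have hsum : Q * (∑ k ∈ I, q k ^ 3 - ∑ k ∈ I, r k ^ 3) ≤
      D * (2 * Q ^ 2 * Q + ∑ k ∈ I, r k ^ 3) + (3 * Q ^ 2 * D + Q * D ^ 2) * D := by
    calc Q * (∑ k ∈ I, q k ^ 3 - ∑ k ∈ I, r k ^ 3)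
        = ∑ k ∈ I, Q * ((r k + (q k - r k)) ^ 3 - r k ^ 3) := by
          simp only [add_sub_cancel, ← sum_sub_distrib, mul_sum]
      _ ≤ ∑ k ∈ I, (D * (2 * Q ^ 2 * r k + r k ^ 3) + (3 * Q ^ 2 * D + Q * D ^ 2) * (q k - r k)) :=
          sum_le_sum fun k hk => mul_cube_add_sub_cube_le (hr k hk) (hd k hk)
            (single_le_sum hr hk) (single_le_sum hd hk)
      _ = D * (2 * Q ^ 2 * Q + ∑ k ∈ I, r k ^ 3) + (3 * Q ^ 2 * D + Q * D ^ 2) * D := by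
          simp only [sum_add_distrib, ← mul_sum, Q, D]
  rw [hPQD, sub_le_sub_iff, div_add' _ _ _ hQ.ne', div_add' _ _ _ (by positivity),
    div_le_div_iff₀ (by positivity) hQ]
  nlinarith [hsum]

end CubeSums

section ClassMass

variable {Ω K : Type*} [DecidableEq K] (p : Ω → ℝ) (cls : Ω → K)

def classMass (s : Finset Ω) (k : K) : ℝ := ∑ φ ∈ s with cls φ = k, p φ

variable {p cls} {s t : Finset Ω} {I : Finset K}

lemma classMass_nonneg (hp : ∀ φ, 0 ≤ p φ) (k : K) : 0 ≤ classMass p cls s k :=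
  sum_nonneg fun φ _ => hp φ

lemma classMass_mono (hp : ∀ φ, 0 ≤ p φ) (hst : s ⊆ t) (k : K) :
    classMass p cls s k ≤ classMass p cls t k :=
  sum_le_sum_of_subset_of_nonneg (filter_subset_filter _ hst) fun φ _ _ => hp φ

lemma sum_classMass (h : ∀ φ ∈ s, cls φ ∈ I) :
    ∑ k ∈ I, classMass p cls s k = ∑ φ ∈ s, p φ :=
  sum_fiberwise_of_maps_to h p

lemma sum_mul_classMass_sq (h : ∀ φ ∈ s, cls φ ∈ I) :
    ∑ φ ∈ s, p φ * classMass p cls s (cls φ) ^ 2 = ∑ k ∈ I, classMass p cls s k ^ 3 := by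
  rw [← sum_fiberwise_of_maps_to h]
  refine sum_congr rfl fun k _ => ?_
  rw [sum_congr rfl fun φ hφ => by rw [(mem_filter.1 hφ).2], ← sum_mul]
  unfold classMass
  ring

lemma sum_div_mul_classMass_sq_eq (h : ∀ φ ∈ s, cls φ ∈ I) (hs : ∑ φ ∈ s, p φ ≠ 0) :
    ∑ φ ∈ s, p φ / (∑ ψ ∈ s, p ψ) *
        (1 - (∑ ψ ∈ s, p ψ) ^ 2 + classMass p cls s (cls φ) ^ 2) =
      1 - (∑ φ ∈ s, p φ) ^ 2 + (∑ k ∈ I, classMass p cls s k ^ 3) / ∑ φ ∈ s, p φ := by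
  simp only [div_mul_eq_mul_div, mul_add, ← sum_div, sum_add_distrib, ← sum_mul,
    sum_mul_classMass_sq h]
  field_simp

end ClassMass

theorem stmt5_general {Ω K O : Type*} [DecidableEq K] [DecidableEq O]
    (p : Ω → ℝ) (hp : ∀ φ, 0 ≤ p φ)
    (cls : Ω → K) (obs : Ω → O) (o : O)
    (a : Finset Ω)
    (b : Finset Ω) (hb : b = a.filter (fun φ => obs φ = o))
    (pA : Finset Ω → ℝ) (hpA : ∀ s, pA s = ∑ φ ∈ s, p φ)
    (mass : Finset Ω → K → ℝ)
    (hmass : ∀ s k, mass s k = ∑ φ ∈ s.filter (fun φ => cls φ = k), p φ)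
    (fe : Finset Ω → ℝ)
    (hfe : ∀ s, fe s = ∑ φ ∈ s, (p φ / pA s) * (1 - (pA s) ^ 2 + (mass s (cls φ)) ^ 2))
    (hpa : 0 < pA a) (hpb : 0 < pA b) :
    fe a ≤ fe b := by
  obtain rfl : pA = fun s => ∑ φ ∈ s, p φ := funext hpA
  obtain rfl : mass = classMass p cls := funext fun s => funext (hmass s)
  have hba : b ⊆ a := hb ▸ filter_subset _ _
  have hIa : ∀ φ ∈ a, cls φ ∈ a.image cls := fun φ => mem_image_of_mem cls
  have hIb : ∀ φ ∈ b, cls φ ∈ a.image cls := fun φ hφ => hIa φ (hba hφ)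
  have key := sum_cube_div_sum_sub_sq_le (fun k _ => classMass_nonneg hp k)
    (fun k _ => classMass_mono hp hba k) (by rwa [sum_classMass hIb])
  rw [sum_classMass hIa, sum_classMass hIb] at key
  rw [hfe, hfe, sum_div_mul_classMass_sq_eq hIa hpa.ne', sum_div_mul_classMass_sq_eq hIb hpb.ne']
  linarith

/-- Strong adaptive monotonicity of `f(Q_A, φ) = 1 - p_a² + (p_a^{k})²`:
if node `b` is obtained from node `a` by observing the outcome `o` of one
additional item `obs`, then the expected reward does not decrease,
`f_E(b) ≥ f_E(a)`, where
`f_E(a) = Σ_{φ ∈ a} (p(φ)/p_a) · (1 - p_a² + (p_a^{class(φ)})²)`. -/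
theorem stmt5 {Ω K O : Type*} [Fintype Ω] [DecidableEq K] [DecidableEq O]
    (p : Ω → ℝ) (hp : ∀ φ, 0 ≤ p φ) (hsum : ∑ φ : Ω, p φ = 1)
    (cls : Ω → K) (obs : Ω → O) (o : O)
    (a : Finset Ω)
    (b : Finset Ω) (hb : b = a.filter (fun φ => obs φ = o))
    (pA : Finset Ω → ℝ) (hpA : ∀ s, pA s = ∑ φ ∈ s, p φ)
    (mass : Finset Ω → K → ℝ)
    (hmass : ∀ s k, mass s k = ∑ φ ∈ s.filter (fun φ => cls φ = k), p φ)
    (fe : Finset Ω → ℝ)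
    (hfe : ∀ s, fe s = ∑ φ ∈ s, (p φ / pA s) * (1 - (pA s) ^ 2 + (mass s (cls φ)) ^ 2))
    (hpa : 0 < pA a) (hpb : 0 < pA b) :
    fe a ≤ fe b :=
  stmt5_general p hp cls obs o a b hb pA hpA mass hmass fe hfe hpa hpb
end
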